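/- Let (π_t)_{t≥0} be a Markov–Feller stochastically continuous semigroup of probability kernels on a metric space X with (t,x) ↦ π_t(x,A) jointly measurable for every Borel A. For t > 0 and a Borel probability measure μ, let Q_t μ be the probability measure Q_t μ(A) = (1/t)∫_0^t P_s^*μ(A) ds. Then for every integer k ≥ 1 and all t_1,…,t_k > 0, lim_{T→∞} sup_{μ} ‖Q_T(Q_{t_k}(⋯(Q_{t_1}μ)⋯)) − Q_T μ‖_TV = 0, where the supremum is over all Borel probability measures μ on X. -/

import Mathlib

open MeasureTheory Filter Topology
open scoped ENNReal

/-- A Markov–Feller stochastically continuous semigroup of probability kernels on a metric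
space `X`. -/
structure MarkovFellerSemigroup {X : Type*} [MetricSpace X] [MeasurableSpace X] [BorelSpace X]
    (π : ℝ → X → Measure X) : Prop where
  prob : ∀ t, 0 ≤ t → ∀ x, IsProbabilityMeasure (π t x)
  meas : ∀ t, 0 ≤ t → ∀ A : Set X, MeasurableSet A → Measurable fun x => π t x A
  init : ∀ x, π 0 x = Measure.dirac x
  semigroup : ∀ t, 0 ≤ t → ∀ s, 0 ≤ s → ∀ x, ∀ A : Set X, MeasurableSet A →
    π (t + s) x A = ∫⁻ y, π s y A ∂(π t x)
  feller : ∀ t, 0 ≤ t → ∀ φ : BoundedContinuousFunction X ℝ,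
    Continuous fun x => ∫ y, φ y ∂(π t x)
  stochCont : ∀ φ : BoundedContinuousFunction X ℝ, ∀ x : X,
    Tendsto (fun t => ∫ y, φ y ∂(π t x)) (nhdsWithin 0 (Set.Ioi 0)) (nhds (φ x))

/-- The total variation norm `‖μ - ν‖_TV = (μ - ν)⁺(X) + (μ - ν)⁻(X)` of the difference of
two (finite) measures, via the Jordan-type variational characterisation
`(μ - ν)⁺(X) = sup_A (μ(A) - ν(A))`. -/
noncomputable def tvDist {X : Type*} [MeasurableSpace X] (μ ν : Measure X) : ℝ :=
  (⨆ A : {S : Set X // MeasurableSet S}, ((μ A.1).toReal - (ν A.1).toReal)) +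
  (⨆ A : {S : Set X // MeasurableSet S}, ((ν A.1).toReal - (μ A.1).toReal))

/-- The Cesàro average operator `Q_t μ (A) = (1/t) ∫₀ᵗ P_s^* μ (A) ds` on Borel
probability measures. -/
noncomputable def Qop {X : Type*} [MeasurableSpace X] (π : ℝ → X → Measure X)
    (t : ℝ) (μ : Measure X) : Measure X :=
  ((ENNReal.ofReal (1 / t)) • (volume.restrict (Set.Ioc (0:ℝ) t))).bind
    (fun s => μ.bind (π s))

/-!
Write `g r = (P_r^* ρ)(A) ∈ [0, 1]`. By the semigroup property, `Q_T (Q_t ρ) (A)` is the average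
over `u ∈ (0, t]` of `(1/T) ∫_{(0,T]} g (u + s) ds`, and shifting the window `(0, T]` by `u ≤ t`
changes that integral by at most `t`. So `|Q_T Q_t ρ (A) - Q_T ρ (A)| ≤ t / T` uniformly in `ρ` and
`A`; telescoping along `t₁, …, t_k` gives `(t₁ + ⋯ + t_k) / T` per set, hence twice that bound for
the total variation distance.
-/

open Set

lemma abs_toReal_sub_le_of_le_add {a b : ℝ≥0∞} {c : ℝ} (ha : a ≠ ⊤) (hb : b ≠ ⊤) (hc : 0 ≤ c)
    (hab : a ≤ b + ENNReal.ofReal c) (hba : b ≤ a + ENNReal.ofReal c) :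
    |a.toReal - b.toReal| ≤ c := by
  have h₁ := ENNReal.toReal_mono (by finiteness) hab
  have h₂ := ENNReal.toReal_mono (by finiteness) hba
  rw [ENNReal.toReal_add hb ENNReal.ofReal_ne_top, ENNReal.toReal_ofReal hc] at h₁
  rw [ENNReal.toReal_add ha ENNReal.ofReal_ne_top, ENNReal.toReal_ofReal hc] at h₂
  exact abs_sub_le_iff.2 ⟨by linarith, by linarith⟩

section Shift

variable {g : ℝ → ℝ≥0∞}

lemma setLIntegral_Ioc_comp_const_add (u T : ℝ) :
    ∫⁻ s in Ioc 0 T, g (u + s) = ∫⁻ r in Ioc u (u + T), g r := by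
  rw [← (measurePreserving_add_right volume u).setLIntegral_comp_preimage_emb
    (measurableEmbedding_addRight u) g]
  simp [add_comm]

lemma setLIntegral_Ioc_le_of_le_one {a b : ℝ} (hg : ∀ r ∈ Ioc a b, g r ≤ 1) :
    ∫⁻ r in Ioc a b, g r ≤ ENNReal.ofReal (b - a) :=
  (setLIntegral_mono' measurableSet_Ioc hg).trans_eq (by simp)

lemma setLIntegral_Ioc_shift_le (hg : ∀ r, 0 < r → g r ≤ 1) {u T : ℝ} (hu : 0 ≤ u)
    (hT : 0 ≤ T) :
    ∫⁻ s in Ioc 0 T, g (u + s) ≤ (∫⁻ s in Ioc 0 T, g s) + ENNReal.ofReal u ∧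
      ∫⁻ s in Ioc 0 T, g s ≤ (∫⁻ s in Ioc 0 T, g (u + s)) + ENNReal.ofReal u := by
  have hg' : ∀ a b, 0 ≤ a → ∫⁻ r in Ioc a b, g r ≤ ENNReal.ofReal (b - a) := fun a b ha =>
    setLIntegral_Ioc_le_of_le_one fun r hr => hg r (ha.trans_lt hr.1)
  rw [setLIntegral_Ioc_comp_const_add]
  constructor
  · calc ∫⁻ r in Ioc u (u + T), g r
        ≤ ∫⁻ r in Ioc 0 T ∪ Ioc T (u + T), g r := by
          rw [Ioc_union_Ioc_eq_Ioc hT (by linarith)]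
          exact lintegral_mono_set (Ioc_subset_Ioc_left hu)
      _ ≤ (∫⁻ r in Ioc 0 T, g r) + ∫⁻ r in Ioc T (u + T), g r :=
          lintegral_union_le g _ _
      _ ≤ (∫⁻ r in Ioc 0 T, g r) + ENNReal.ofReal u := by
          grw [hg' T (u + T) hT, add_sub_cancel_right]
  · calc ∫⁻ r in Ioc 0 T, g r
        ≤ ∫⁻ r in Ioc u (u + T) ∪ Ioc 0 u, g r := by
          rw [union_comm, Ioc_union_Ioc_eq_Ioc hu (by linarith)]
          exact lintegral_mono_set (Ioc_subset_Ioc_right (by linarith))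
      _ ≤ (∫⁻ r in Ioc u (u + T), g r) + ∫⁻ r in Ioc 0 u, g r :=
          lintegral_union_le g _ _
      _ ≤ (∫⁻ r in Ioc u (u + T), g r) + ENNReal.ofReal u := by
          grw [hg' 0 u le_rfl, sub_zero]

end Shift

/-- The uniform distribution on `(0, t]` for `t > 0`, and the zero measure for `t ≤ 0`. -/
noncomputable def uniformIoc (t : ℝ) : Measure ℝ :=
  ENNReal.ofReal (1 / t) • volume.restrict (Ioc 0 t)

namespace uniformIoc

variable {t : ℝ}

instance : SFinite (uniformIoc t) := by
  unfold uniformIoc; infer_instance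

lemma isProbabilityMeasure (ht : 0 < t) : IsProbabilityMeasure (uniformIoc t) := by
  constructor
  rw [uniformIoc, Measure.smul_apply, Measure.restrict_apply_univ, Real.volume_Ioc, sub_zero,
    smul_eq_mul, ← ENNReal.ofReal_mul (by positivity), one_div_mul_cancel ht.ne',
    ENNReal.ofReal_one]

lemma ae_mem (t : ℝ) : ∀ᵐ s ∂uniformIoc t, s ∈ Ioc 0 t :=
  Measure.ae_smul_measure (ae_restrict_mem measurableSet_Ioc) _

variable {g : ℝ → ℝ≥0∞}

lemma lintegral_shift_le (hg : ∀ r, 0 < r → g r ≤ 1) {u T : ℝ} (hu : 0 ≤ u) (hT : 0 < T) :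
    ∫⁻ s, g (u + s) ∂uniformIoc T ≤ ∫⁻ s, g s ∂uniformIoc T + ENNReal.ofReal (u / T) ∧
      ∫⁻ s, g s ∂uniformIoc T ≤ ∫⁻ s, g (u + s) ∂uniformIoc T + ENNReal.ofReal (u / T) := by
  have hscale : ENNReal.ofReal (1 / T) * ENNReal.ofReal u = ENNReal.ofReal (u / T) := by
    rw [← ENNReal.ofReal_mul (by positivity), one_div_mul_eq_div]
  obtain ⟨h₁, h₂⟩ := setLIntegral_Ioc_shift_le hg hu hT.le
  simp only [uniformIoc, lintegral_smul_measure, smul_eq_mul, ← hscale, ← mul_add]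
  exact ⟨by gcongr, by gcongr⟩

lemma lintegral_lintegral_shift_le (hg : ∀ r, 0 < r → g r ≤ 1) {T : ℝ} (ht : 0 < t)
    (hT : 0 < T) :
    ∫⁻ u, ∫⁻ s, g (u + s) ∂uniformIoc T ∂uniformIoc t
        ≤ ∫⁻ s, g s ∂uniformIoc T + ENNReal.ofReal (t / T) ∧
      ∫⁻ s, g s ∂uniformIoc T
        ≤ ∫⁻ u, ∫⁻ s, g (u + s) ∂uniformIoc T ∂uniformIoc t + ENNReal.ofReal (t / T) := by
  have := isProbabilityMeasure ht
  have hshift : ∀ᵐ u ∂uniformIoc t,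
      ∫⁻ s, g (u + s) ∂uniformIoc T ≤ ∫⁻ s, g s ∂uniformIoc T + ENNReal.ofReal (t / T) ∧
        ∫⁻ s, g s ∂uniformIoc T ≤ ∫⁻ s, g (u + s) ∂uniformIoc T + ENNReal.ofReal (t / T) := by
    filter_upwards [ae_mem t] with u hu
    have hut : ENNReal.ofReal (u / T) ≤ ENNReal.ofReal (t / T) :=
      ENNReal.ofReal_le_ofReal (div_le_div_of_nonneg_right hu.2 hT.le)
    obtain ⟨h₁, h₂⟩ := lintegral_shift_le hg hu.1.le hT
    exact ⟨h₁.trans (by gcongr), h₂.trans (by gcongr)⟩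
  constructor
  · exact lintegral_le_const (hshift.mono fun _ h => h.1)
  · calc ∫⁻ s, g s ∂uniformIoc T
        = ∫⁻ _, ∫⁻ s, g s ∂uniformIoc T ∂uniformIoc t := by simp
      _ ≤ ∫⁻ u, (∫⁻ s, g (u + s) ∂uniformIoc T + ENNReal.ofReal (t / T)) ∂uniformIoc t :=
          lintegral_mono_ae (hshift.mono fun _ h => h.2)
      _ = _ := by rw [lintegral_add_right _ measurable_const]; simp

end uniformIoc

def JointlyMeasurable {X : Type*} [MeasurableSpace X] (π : ℝ → X → Measure X) : Prop :=
  ∀ A : Set X, MeasurableSet A → Measurable fun q : ℝ × X => π q.1 q.2 A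

section Semigroup

variable {X : Type*} [MeasurableSpace X] {π : ℝ → X → Measure X}

lemma tvDist_le_of_abs_sub_le {μ ν : Measure X} {c : ℝ}
    (h : ∀ A, MeasurableSet A → |(μ A).toReal - (ν A).toReal| ≤ c) : tvDist μ ν ≤ 2 * c := by
  have : Nonempty {S : Set X // MeasurableSet S} := ⟨⟨∅, .empty⟩⟩
  rw [tvDist, two_mul]
  exact add_le_add (ciSup_le fun A => (abs_le.1 (h A.1 A.2)).2)
    (ciSup_le fun A => (abs_le.1 ((abs_sub_comm _ _).trans_le (h A.1 A.2))).2)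

lemma JointlyMeasurable.measurable_bind (hπ : JointlyMeasurable π) (ρ : Measure X) [SFinite ρ] :
    Measurable fun s => ρ.bind (π s) := by
  refine Measure.measurable_of_measurable_coe _ fun A hA => ?_
  have hπs : ∀ s, Measurable (π s) := fun s =>
    Measure.measurable_of_measurable_coe _ fun B hB => (hπ B hB).comp measurable_prodMk_left
  simp only [Measure.bind_apply hA (hπs _).aemeasurable]
  exact (hπ A hA).lintegral_prod_right'

lemma qop_eq_bind (t : ℝ) (μ : Measure X) :
    Qop π t μ = (uniformIoc t).bind fun s => μ.bind (π s) :=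
  rfl

lemma qop_apply (hπ : JointlyMeasurable π) (t : ℝ) (μ : Measure X) [SFinite μ] {A : Set X}
    (hA : MeasurableSet A) : Qop π t μ A = ∫⁻ s, μ.bind (π s) A ∂uniformIoc t :=
  Measure.bind_apply hA (hπ.measurable_bind μ).aemeasurable

namespace MarkovFellerSemigroup

variable [MetricSpace X] [BorelSpace X]

lemma measurable (hπ : MarkovFellerSemigroup π) {t : ℝ} (ht : 0 ≤ t) : Measurable (π t) :=
  Measure.measurable_of_measurable_coe _ (hπ.meas t ht)

lemma isProbabilityMeasure_bind (hπ : MarkovFellerSemigroup π) {t : ℝ} (ht : 0 ≤ t)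
    (ρ : Measure X) [IsProbabilityMeasure ρ] : IsProbabilityMeasure (ρ.bind (π t)) :=
  MeasureTheory.isProbabilityMeasure_bind (hπ.measurable ht).aemeasurable
    (ae_of_all _ (hπ.prob t ht))

lemma bind_bind (hπ : MarkovFellerSemigroup π) {u s : ℝ} (hu : 0 ≤ u) (hs : 0 ≤ s)
    (ρ : Measure X) : (ρ.bind (π u)).bind (π s) = ρ.bind (π (u + s)) := by
  rw [Measure.bind_bind (hπ.measurable hu).aemeasurable (hπ.measurable hs).aemeasurable]
  congr 1
  ext x A hA
  rw [Measure.bind_apply hA (hπ.measurable hs).aemeasurable, hπ.semigroup u hu s hs x A hA]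

lemma isProbabilityMeasure_qop (hπ : MarkovFellerSemigroup π) (hjoint : JointlyMeasurable π)
    {t : ℝ} (ht : 0 < t) (μ : Measure X) [IsProbabilityMeasure μ] :
    IsProbabilityMeasure (Qop π t μ) :=
  have := uniformIoc.isProbabilityMeasure ht
  qop_eq_bind (π := π) t μ ▸
    MeasureTheory.isProbabilityMeasure_bind (hjoint.measurable_bind μ).aemeasurable
      ((uniformIoc.ae_mem t).mono fun _ hs => hπ.isProbabilityMeasure_bind hs.1.le μ)

lemma qop_bind_apply (hπ : MarkovFellerSemigroup π) (hjoint : JointlyMeasurable π) (t : ℝ)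
    (ρ : Measure X) [SFinite ρ] {s : ℝ} (hs : 0 ≤ s) {A : Set X} (hA : MeasurableSet A) :
    (Qop π t ρ).bind (π s) A = ∫⁻ u, ρ.bind (π (u + s)) A ∂uniformIoc t := by
  have hρ := hjoint.measurable_bind ρ
  have hρs : Measurable fun u => (ρ.bind (π u)).bind (π s) :=
    (Measure.measurable_bind' (hπ.measurable hs)).comp hρ
  rw [qop_eq_bind, Measure.bind_bind hρ.aemeasurable (hπ.measurable hs).aemeasurable,
    Measure.bind_apply hA hρs.aemeasurable]
  exact lintegral_congr_ae <| (uniformIoc.ae_mem t).mono fun u hu =>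
    congrArg (· A) (hπ.bind_bind hu.1.le hs ρ)

lemma qop_qop_apply (hπ : MarkovFellerSemigroup π) (hjoint : JointlyMeasurable π) {t : ℝ}
    (ht : 0 < t) (T : ℝ) (ρ : Measure X) [IsProbabilityMeasure ρ] {A : Set X}
    (hA : MeasurableSet A) :
    Qop π T (Qop π t ρ) A = ∫⁻ u, ∫⁻ s, ρ.bind (π (u + s)) A ∂uniformIoc T ∂uniformIoc t := by
  have := hπ.isProbabilityMeasure_qop hjoint ht ρ
  have hg : Measurable fun r => ρ.bind (π r) A :=
    (Measure.measurable_coe hA).comp (hjoint.measurable_bind ρ)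
  rw [qop_apply hjoint T _ hA, lintegral_lintegral_swap (f := fun u s => ρ.bind (π (u + s)) A)
    (hg.comp (measurable_fst.add measurable_snd)).aemeasurable]
  exact lintegral_congr_ae <| (uniformIoc.ae_mem T).mono fun s hs =>
    hπ.qop_bind_apply hjoint t ρ hs.1.le hA

lemma abs_qop_qop_sub_qop_le (hπ : MarkovFellerSemigroup π) (hjoint : JointlyMeasurable π)
    {t T : ℝ} (ht : 0 < t) (hT : 0 < T) (ρ : Measure X) [IsProbabilityMeasure ρ] {A : Set X}
    (hA : MeasurableSet A) :
    |(Qop π T (Qop π t ρ) A).toReal - (Qop π T ρ A).toReal| ≤ t / T := by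
  have hg : ∀ r, 0 < r → ρ.bind (π r) A ≤ 1 := fun r hr =>
    have := hπ.isProbabilityMeasure_bind hr.le ρ
    prob_le_one
  obtain ⟨h₁, h₂⟩ := uniformIoc.lintegral_lintegral_shift_le hg ht hT
  rw [← hπ.qop_qop_apply hjoint ht T ρ hA, ← qop_apply hjoint T ρ hA] at h₁ h₂
  have := hπ.isProbabilityMeasure_qop hjoint ht ρ
  have := hπ.isProbabilityMeasure_qop hjoint hT ρ
  have := hπ.isProbabilityMeasure_qop hjoint hT (Qop π t ρ)
  exact abs_toReal_sub_le_of_le_add (measure_ne_top _ _) (measure_ne_top _ _) (by positivity) h₁ h₂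

lemma abs_qop_foldl_qop_sub_qop_le (hπ : MarkovFellerSemigroup π)
    (hjoint : JointlyMeasurable π) {T : ℝ} (hT : 0 < T) (ts : List ℝ) (hpos : ∀ t ∈ ts, 0 < t)
    (μ : Measure X) [IsProbabilityMeasure μ] {A : Set X} (hA : MeasurableSet A) :
    |(Qop π T (ts.foldl (fun ν s => Qop π s ν) μ) A).toReal - (Qop π T μ A).toReal|
      ≤ ts.sum / T := by
  induction ts generalizing μ with
  | nil => simp
  | cons t ts ih =>
    have ht := hpos t List.mem_cons_self
    have := hπ.isProbabilityMeasure_qop hjoint ht μ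
    rw [List.foldl_cons, List.sum_cons, add_div, add_comm (t / T)]
    exact (abs_sub_le _ (Qop π T (Qop π t μ) A).toReal _).trans <| add_le_add
      (ih (fun s hs => hpos s (List.mem_cons_of_mem t hs)) _)
      (hπ.abs_qop_qop_sub_qop_le hjoint ht hT μ hA)

end MarkovFellerSemigroup

end Semigroup

theorem tv_cesaro_composition_tendsto_zero_general
    {X : Type*} [MetricSpace X] [MeasurableSpace X] [BorelSpace X]
    (π : ℝ → X → Measure X) (hMFS : MarkovFellerSemigroup π)
    (hjoint : ∀ A : Set X, MeasurableSet A → Measurable fun q : ℝ × X => π q.1 q.2 A)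
    (ts : List ℝ) (hpos : ∀ t ∈ ts, 0 < t) :
    ∀ ε : ℝ, 0 < ε → ∀ᶠ T in (atTop : Filter ℝ), ∀ μ : Measure X, IsProbabilityMeasure μ →
      tvDist (Qop π T (ts.foldl (fun ν s => Qop π s ν) μ)) (Qop π T μ) < ε := by
  intro ε hε
  filter_upwards [eventually_gt_atTop 0, eventually_gt_atTop (2 * ts.sum / ε)]
    with T hT hTε μ hμ
  calc tvDist _ _ ≤ 2 * (ts.sum / T) := tvDist_le_of_abs_sub_le fun A hA =>
        hMFS.abs_qop_foldl_qop_sub_qop_le hjoint hT ts hpos μ hA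
    _ < ε := by
      rw [div_lt_iff₀ hε] at hTε
      rw [← mul_div_assoc, div_lt_iff₀ hT]
      linarith

/-- **Lemma 3.2.** For every `k ≥ 1` and `t₁, …, t_k > 0`,
`lim_{T→∞} sup_μ ‖Q_T Q_{t_k} ⋯ Q_{t_1} μ - Q_T μ‖_TV = 0`, the supremum being taken over
all Borel probability measures `μ`.  Here the list `ts = [t₁, …, t_k]` is nonempty and
`Q_{t_k} ⋯ Q_{t_1} μ` is its left fold. -/
theorem tv_cesaro_composition_tendsto_zero
    {X : Type*} [MetricSpace X] [MeasurableSpace X] [BorelSpace X]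
    (π : ℝ → X → Measure X) (hMFS : MarkovFellerSemigroup π)
    (hjoint : ∀ A : Set X, MeasurableSet A → Measurable fun q : ℝ × X => π q.1 q.2 A)
    (ts : List ℝ) (hne : ts ≠ []) (hpos : ∀ t ∈ ts, 0 < t) :
    ∀ ε : ℝ, 0 < ε → ∀ᶠ T in (atTop : Filter ℝ), ∀ μ : Measure X, IsProbabilityMeasure μ →
      tvDist (Qop π T (ts.foldl (fun ν s => Qop π s ν) μ)) (Qop π T μ) < ε :=
  tv_cesaro_composition_tendsto_zero_general π hMFS hjoint ts hpos
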